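/- Under the construction hypotheses (a distributive lattice D, groups G_α, and transitive isomorphisms φ_{α,β} for β ≤ α with ψ = φ^{-1}), the operations on S = Σ_{α∈D} G_α satisfy the right distributive law: (x + y)·z = x·z + y·z for all x, y, z ∈ S. -/

import Mathlib

variable {D : Type*} [DistribLattice D] {G : D → Type*} [∀ α : D, Group (G α)]

/-- Multiplication on the disjoint union `S = Σ α, G α`:
`(α, x) · (β, y) = (αβ, φ_{α,αβ}(x) · φ_{β,αβ}(y))`. -/
def cMul (φ : ∀ α β : D, β ≤ α → (G α ≃* G β)) (s t : Σ α : D, G α) :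
    Σ α : D, G α :=
  ⟨s.1 ⊓ t.1,
    φ s.1 (s.1 ⊓ t.1) inf_le_left s.2 * φ t.1 (s.1 ⊓ t.1) inf_le_right t.2⟩

/-- Addition on the disjoint union `S = Σ α, G α`:
`(α, x) + (β, y) = (α + β, ψ_{α,α+β}(x))`, where `ψ_{β,α} = (φ_{α,β})⁻¹`
for `β ≤ α` (each `G α` carries the left-zero addition). -/
def cAdd (φ : ∀ α β : D, β ≤ α → (G α ≃* G β)) (s t : Σ α : D, G α) :
    Σ α : D, G α :=
  ⟨s.1 ⊔ t.1, (φ (s.1 ⊔ t.1) s.1 le_sup_left).symm s.2⟩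

/-!
By distributivity `(α + β)γ = αγ + βγ`, so both sides lie over the same index. Mapping both
components down to `αγ` with `φ`, transitivity turns each into `φ_{α,αγ}(x) · φ_{γ,αγ}(z)`.
-/

section Transitive

variable (φ : ∀ α β : D, β ≤ α → (G α ≃* G β))
  (hφ_trans : ∀ {α β γ : D} (h1 : γ ≤ β) (h2 : β ≤ α) (x : G α),
    φ β γ h1 (φ α β h2 x) = φ α γ (h1.trans h2) x)
include hφ_trans

/-- `φ α α` is an idempotent bijection, hence the identity. -/
theorem phi_self_apply (α : D) (x : G α) : φ α α le_rfl x = x :=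
  (φ α α le_rfl).injective (hφ_trans le_rfl le_rfl x)

theorem phi_apply_symm_apply {α β γ : D} (hγβ : γ ≤ β) (hβα : β ≤ α) (hγα : γ ≤ α) (x : G β) :
    φ α γ hγα ((φ α β hβα).symm x) = φ β γ hγβ x := by
  rw [← hφ_trans hγβ hβα, MulEquiv.apply_symm_apply]

theorem sigma_mk_eq_mk_of_phi_eq {α β : D} (h : α = β) (x : G α) (y : G β)
    (hxy : φ α β h.ge x = y) : (⟨α, x⟩ : Σ α, G α) = ⟨β, y⟩ := by
  subst h
  rw [← hxy, phi_self_apply φ hφ_trans]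

end Transitive

theorem construction_right_distrib_general
    (φ : ∀ α β : D, β ≤ α → (G α ≃* G β))
    (hφ_trans : ∀ {α β γ : D} (h1 : γ ≤ β) (h2 : β ≤ α) (x : G α),
      φ β γ h1 (φ α β h2 x) = φ α γ (h1.trans h2) x)
    (x y z : Σ α : D, G α) :
    cMul φ (cAdd φ x y) z = cAdd φ (cMul φ x z) (cMul φ y z) := by
  obtain ⟨α, a⟩ := x
  obtain ⟨β, b⟩ := y
  obtain ⟨γ, c⟩ := z
  dsimp only [cMul, cAdd]
  refine sigma_mk_eq_mk_of_phi_eq φ hφ_trans (inf_sup_right α β γ) _ _ ?_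
  rw [MulEquiv.eq_symm_apply, hφ_trans, map_mul, hφ_trans, hφ_trans,
    phi_apply_symm_apply φ hφ_trans]

/-- Under the construction hypotheses, the operations on
`S = Σ α, G α` satisfy the right distributive law:
`(x + y) · z = x·z + y·z` for all `x, y, z ∈ S`. -/
theorem construction_right_distrib
    (φ : ∀ α β : D, β ≤ α → (G α ≃* G β))
    (hφ_id : ∀ (α : D) (x : G α), φ α α le_rfl x = x)
    (hφ_trans : ∀ {α β γ : D} (h1 : γ ≤ β) (h2 : β ≤ α) (x : G α),
      φ β γ h1 (φ α β h2 x) = φ α γ (h1.trans h2) x)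
    (x y z : Σ α : D, G α) :
    cMul φ (cAdd φ x y) z = cAdd φ (cMul φ x z) (cMul φ y z) :=
  construction_right_distrib_general φ hφ_trans x y z
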